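/- Let 1 ≤ k ≤ n, let i₁ < … < i_k and α₁ < … < α_k be k row indices and k column indices in {1, …, n}, and let d_k : ℂ^{n×n} → ℂ be the corresponding k×k subdeterminant, d_k(z) = det((z_{i_a α_b})_{1 ≤ a,b ≤ k}). Then on U(n) one has τ(d_k) = −k(n−k+1) d_k, i.e. for every p ∈ U(n), τ(d_k)(p) = −k(n−k+1) d_k(p). -/

import Mathlib

open Matrix

noncomputable section

/-- The matrix unit `E_{rs}` in `ℂ^{n×n}`. -/
def matE (n : ℕ) (r s : Fin n) : Matrix (Fin n) (Fin n) ℂ :=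
  Matrix.single r s 1

/-- `Y_{rs} = (E_{rs} − E_{sr})/√2`. -/
def matY (n : ℕ) (r s : Fin n) : Matrix (Fin n) (Fin n) ℂ :=
  ((Real.sqrt 2 : ℂ))⁻¹ • (matE n r s - matE n s r)

/-- `X_{rs} = (E_{rs} + E_{sr})/√2`. -/
def matX (n : ℕ) (r s : Fin n) : Matrix (Fin n) (Fin n) ℂ :=
  ((Real.sqrt 2 : ℂ))⁻¹ • (matE n r s + matE n s r)

/-- `Z(f)(p) = (d/ds)|₀ f(p·exp(sZ))`: derivative of `f` at `p` along the
left-invariant vector field determined by `Z`. -/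
def lieD1 {n : ℕ} (f : Matrix (Fin n) (Fin n) ℂ → ℂ)
    (p Z : Matrix (Fin n) (Fin n) ℂ) : ℂ :=
  deriv (fun s : ℝ => f (p * NormedSpace.exp ((s : ℂ) • Z))) 0

/-- `Z²(f)(p) = (d²/ds²)|₀ f(p·exp(sZ))`. -/
def lieD2 {n : ℕ} (f : Matrix (Fin n) (Fin n) ℂ → ℂ)
    (p Z : Matrix (Fin n) (Fin n) ℂ) : ℂ :=
  deriv (deriv (fun s : ℝ => f (p * NormedSpace.exp ((s : ℂ) • Z)))) 0

/-- The Laplace–Beltrami operator (tension field) on `U(n)`: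
`τ(f)(p) = Σ_{Z ∈ B} Z²(f)(p)` for the standard orthonormal basis
`B = {Y_{rs}, iX_{rs} : r < s} ∪ {iE_{tt}}` of `u(n)`. -/
def tauU (n : ℕ) (f : Matrix (Fin n) (Fin n) ℂ → ℂ)
    (p : Matrix (Fin n) (Fin n) ℂ) : ℂ :=
  (∑ r : Fin n, ∑ s : Fin n, if r < s then
      lieD2 f p (matY n r s) + lieD2 f p (Complex.I • matX n r s) else 0)
  + ∑ t : Fin n, lieD2 f p (Complex.I • matE n t t)

/-- The conformality operator on `U(n)`:
`κ(f,h)(p) = Σ_{Z ∈ B} Z(f)(p)·Z(h)(p)`. -/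
def kappaU (n : ℕ) (f h : Matrix (Fin n) (Fin n) ℂ → ℂ)
    (p : Matrix (Fin n) (Fin n) ℂ) : ℂ :=
  (∑ r : Fin n, ∑ s : Fin n, if r < s then
      lieD1 f p (matY n r s) * lieD1 h p (matY n r s)
        + lieD1 f p (Complex.I • matX n r s) * lieD1 h p (Complex.I • matX n r s) else 0)
  + ∑ t : Fin n, lieD1 f p (Complex.I • matE n t t) * lieD1 h p (Complex.I • matE n t t)

/-!
Along the curve `s ↦ p · exp(sZ)` the rows of the submatrix have first and second derivatives
given by the rows of `p Z` and `p Z²`, so `Z²(d_k)(p)` is a sum of determinants with one row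
replaced by a row of `p Z²` and of determinants with two rows replaced by rows of `p Z`.
Summing over the orthonormal basis `B`, the Casimir identity
`Σ_{Z ∈ B} Z_{vα} Z_{wβ} = -δ_{vβ} δ_{wα}` gives `Σ_Z p Z² = -n p`, so each of the `k` terms of the
first kind contributes `-n d_k`; and it turns each of the `k(k-1)` terms of the second kind into
minus the determinant with the two rows swapped, that is into `d_k`.
Hence `τ(d_k) = (-nk + k(k-1)) d_k = -k(n-k+1) d_k`.
-/

theorem Fintype.sum_sum_ite_lt_add_sum_diag {ι M : Type*} [Fintype ι] [LinearOrder ι]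
    [AddCommMonoid M] (g : ι → ι → M) :
    (∑ r, ∑ s, if r < s then g r s + g s r else 0) + ∑ t, g t t = ∑ r, ∑ s, g r s := by
  have hsplit (r s : ι) : g r s = ((if r < s then g r s else 0) + (if s < r then g r s else 0))
      + (if r = s then g r s else 0) := by
    rcases lt_trichotomy r s with h | rfl | h
    · simp [h, h.not_gt, h.ne]
    · simp
    · simp [h, h.not_gt, h.ne']
  rw [Finset.sum_congr rfl fun r _ => Finset.sum_congr rfl fun s _ => hsplit r s]
  simp only [Finset.sum_add_distrib, Finset.sum_ite_eq, Finset.mem_univ, if_true, ite_add_zero]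
  rw [Finset.sum_comm (f := fun r s => if s < r then g r s else 0)]

namespace LinearMap

variable {R X ι : Type*} [CommSemiring R]

theorem map_fun_sum (Λ : (X → R) →ₗ[R] R) (s : Finset ι) (F : ι → X → R) :
    Λ (fun Z => ∑ j ∈ s, F j Z) = ∑ j ∈ s, Λ (F j) := by
  rw [← map_sum, Finset.sum_fn]

variable [Fintype ι] [DecidableEq ι]

theorem map_linearMap_comp (Λ : (X → R) →ₗ[R] R) (L : (ι → R) →ₗ[R] R) {u : X → ι → R}
    {x : ι → R} (h : ∀ b, Λ (fun Z => u Z b) = x b) :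
    Λ (fun Z => L (u Z)) = L x := by
  have hexpand : (fun Z => L (u Z))
      = ∑ b, (L fun j => if b = j then 1 else 0) • fun Z => u Z b := by
    funext Z
    simp [L.pi_apply_eq_sum_univ (u Z), Finset.sum_apply, mul_comm]
  simp [hexpand, map_sum, h, L.pi_apply_eq_sum_univ x, mul_comm]

theorem map_bilinear_comp (Λ : (X → R) →ₗ[R] R) (B : (ι → R) →ₗ[R] (ι → R) →ₗ[R] R)
    {u v : X → ι → R} {x y : ι → R} (h : ∀ b b', Λ (fun Z => u Z b * v Z b') = x b * y b') :
    Λ (fun Z => B (u Z) (v Z)) = B x y := by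
  have hexpand (u v : ι → R) : B u v = ∑ b, ∑ b', (u b * v b') •
      B (fun j => if b = j then 1 else 0) (fun j => if b' = j then 1 else 0) := by
    conv_lhs => rw [pi_eq_sum_univ u, pi_eq_sum_univ v]
    simp only [map_sum, map_smul, LinearMap.sum_apply, LinearMap.smul_apply, Finset.smul_sum,
      smul_smul]
    rw [Finset.sum_comm]
    simp only [mul_comm]
  have hfun : (fun Z => B (u Z) (v Z)) = ∑ b, ∑ b', B (fun j => if b = j then 1 else 0)
      (fun j => if b' = j then 1 else 0) • fun Z => u Z b * v Z b' := by
    funext Z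
    simp [hexpand (u Z), Finset.sum_apply, mul_comm]
  rw [hfun, hexpand x y]
  simp [map_sum, h, mul_comm]

end LinearMap

namespace Matrix

variable {m R : Type*} [Fintype m] [DecidableEq m] [CommRing R]

def detUpdateRow₂ (A : Matrix m m R) {j l : m} (hjl : j ≠ l) :
    (m → R) →ₗ[R] (m → R) →ₗ[R] R :=
  LinearMap.mk₂ R (fun u v => ((A.updateRow j u).updateRow l v).det)
    (fun u u' v => by simp only [updateRow_comm _ hjl, det_updateRow_add])
    (fun c u v => by simp only [updateRow_comm _ hjl, det_updateRow_smul, smul_eq_mul])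
    (fun u v v' => det_updateRow_add _ l v v')
    (fun c u v => det_updateRow_smul _ l c v)

theorem det_updateRow_updateRow_swap (A : Matrix m m R) {j l : m} (hjl : j ≠ l) :
    ((A.updateRow j (A l)).updateRow l (A j)).det = -A.det := by
  have hswap : (A.updateRow j (A l)).updateRow l (A j) = A.submatrix (Equiv.swap l j) id :=
    (Equiv.comp_swap_eq_update l j A).symm
  rw [hswap, det_permute, Equiv.Perm.sign_swap hjl.symm]
  simp

variable {𝕜 ι : Type*} [NontriviallyNormedField 𝕜] [Fintype ι] [DecidableEq ι]
  {M M' M'' : 𝕜 → Matrix ι ι 𝕜} {u : 𝕜}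

theorem hasDerivAt_det (h : ∀ j b, HasDerivAt (fun u => M u j b) (M' u j b) u) :
    HasDerivAt (fun u => (M u).det) (∑ j, ((M u).updateRow j (M' u j)).det) u := by
  let D : ContinuousMultilinearMap 𝕜 (fun _ : ι => ι → 𝕜) 𝕜 :=
    ⟨detRowAlternating.toMultilinearMap, continuous_id.matrix_det⟩
  have hrows : HasDerivAt (fun u j b => M u j b) (fun j b => M' u j b) u :=
    hasDerivAt_pi.2 fun j => hasDerivAt_pi.2 (h j)
  have hD := (D.hasFDerivAt (fun j b => M u j b)).comp_hasDerivAt u hrows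
  rw [ContinuousMultilinearMap.linearDeriv_apply] at hD
  exact hD

theorem hasDerivAt_sum_det_updateRow
    (h' : ∀ u j b, HasDerivAt (fun u => M u j b) (M' u j b) u)
    (h'' : ∀ u j b, HasDerivAt (fun u => M' u j b) (M'' u j b) u) :
    HasDerivAt (fun u => ∑ j, ((M u).updateRow j (M' u j)).det)
      (∑ j, ∑ l, if l = j then ((M u).updateRow j (M'' u j)).det
        else (((M u).updateRow j (M' u j)).updateRow l (M' u l)).det) u := by
  refine HasDerivAt.fun_sum fun j _ => ?_
  have hentries (l b : ι) : HasDerivAt (fun u => (M u).updateRow j (M' u j) l b)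
      ((M' u).updateRow j (M'' u j) l b) u := by
    by_cases hl : l = j
    · subst hl; simpa using h'' u l b
    · simpa [updateRow_ne hl] using h' u l b
  refine (hasDerivAt_det (M := fun u => (M u).updateRow j (M' u j))
    (M' := fun u => (M' u).updateRow j (M'' u j)) hentries).congr_deriv
    (Finset.sum_congr rfl fun l _ => ?_)
  by_cases hl : l = j
  · subst hl; simp
  · simp [hl]

end Matrix

theorem deriv_deriv_ofReal_zero {F F' : ℂ → ℂ} {F'' : ℂ} (hF : ∀ u, HasDerivAt F (F' u) u)
    (hF' : HasDerivAt F' F'' 0) :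
    deriv (deriv fun s : ℝ => F s) 0 = F'' := by
  have hderiv : deriv (fun s : ℝ => F s) = fun s : ℝ => F' s :=
    funext fun s => (hF s).comp_ofReal.deriv
  rw [hderiv]
  exact (by simpa using hF'.comp_ofReal (z := 0) : HasDerivAt (fun s : ℝ => F' s) F'' 0).deriv

open Complex in
def basisSumU (n : ℕ) : (Matrix (Fin n) (Fin n) ℂ → ℂ) →ₗ[ℂ] ℂ where
  toFun F := (∑ r : Fin n, ∑ s : Fin n, if r < s then
      F (matY n r s) + F (I • matX n r s) else 0) + ∑ t : Fin n, F (I • matE n t t)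
  map_add' F G := by
    simp only [Pi.add_apply, Finset.sum_add_distrib, add_add_add_comm _ (G _), ite_add_zero]
    abel
  map_smul' c F := by
    simp only [Pi.smul_apply, smul_eq_mul, RingHom.id_apply, mul_add, Finset.mul_sum, mul_ite,
      mul_zero]

theorem tauU_eq_basisSumU (n : ℕ) (f : Matrix (Fin n) (Fin n) ℂ → ℂ)
    (p : Matrix (Fin n) (Fin n) ℂ) : tauU n f p = basisSumU n (lieD2 f p) := rfl

section Casimir

variable {n : ℕ}

theorem matY_mul_add_I_matX_mul (r s v α w β : Fin n) :
    matY n r s v α * matY n r s w β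
        + (Complex.I • matX n r s) v α * (Complex.I • matX n r s) w β
      = -(matE n r s v α * matE n s r w β) + -(matE n s r v α * matE n r s w β) := by
  have hsqrt : ((Real.sqrt 2 : ℂ))⁻¹ * ((Real.sqrt 2 : ℂ))⁻¹ = 2⁻¹ := by
    rw [← mul_inv, ← Complex.ofReal_mul, Real.mul_self_sqrt zero_le_two]
    norm_num
  simp only [matY, matX, Matrix.smul_apply, Matrix.sub_apply, Matrix.add_apply, smul_eq_mul]
  linear_combination ((matE n r s v α - matE n s r v α) * (matE n r s w β - matE n s r w β)
      + Complex.I * Complex.I * (matE n r s v α + matE n s r v α)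
        * (matE n r s w β + matE n s r w β)) * hsqrt
    + 2⁻¹ * (matE n r s v α + matE n s r v α) * (matE n r s w β + matE n s r w β)
      * Complex.I_mul_I

theorem I_matE_mul (t v α w β : Fin n) :
    (Complex.I • matE n t t) v α * (Complex.I • matE n t t) w β
      = -(matE n t t v α * matE n t t w β) := by
  simp only [Matrix.smul_apply, smul_eq_mul]
  linear_combination matE n t t v α * matE n t t w β * Complex.I_mul_I

theorem basisSumU_apply_mul_apply (v α w β : Fin n) :
    basisSumU n (fun Z => Z v α * Z w β) = -if v = β ∧ w = α then 1 else 0 := by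
  simp only [basisSumU, LinearMap.coe_mk, AddHom.coe_mk, matY_mul_add_I_matX_mul, I_matE_mul]
  rw [Fintype.sum_sum_ite_lt_add_sum_diag fun r s => -(matE n r s v α * matE n s r w β)]
  simp [matE, Matrix.single_apply, Finset.sum_neg_distrib, ite_and, eq_comm]

theorem basisSumU_mul_apply_mul_mul_apply (p q : Matrix (Fin n) (Fin n) ℂ) (x α y β : Fin n) :
    basisSumU n (fun Z => (p * Z) x α * (q * Z) y β) = -(p x β * q y α) := by
  have hexpand : (fun Z : Matrix (Fin n) (Fin n) ℂ => (p * Z) x α * (q * Z) y β)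
      = ∑ v, ∑ w, (p x v * q y w) • fun Z => Z v α * Z w β := by
    funext Z
    simp only [Matrix.mul_apply, Finset.sum_mul_sum, Finset.sum_apply, Pi.smul_apply, smul_eq_mul,
      mul_mul_mul_comm]
  simp [hexpand, map_sum, basisSumU_apply_mul_apply, ite_and]

theorem basisSumU_mul_mul_apply (p : Matrix (Fin n) (Fin n) ℂ) (x y : Fin n) :
    basisSumU n (fun Z => (p * Z * Z) x y) = -(n : ℂ) * p x y := by
  have hexpand : (fun Z : Matrix (Fin n) (Fin n) ℂ => (p * Z * Z) x y)
      = ∑ α, fun Z => (p * Z) x α * Z α y := by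
    funext Z
    rw [Finset.sum_apply, Matrix.mul_apply]
  have hterm (α : Fin n) : basisSumU n (fun Z => (p * Z) x α * Z α y) = -p x y := by
    simpa using basisSumU_mul_apply_mul_mul_apply p 1 x α α y
  simp [hexpand, map_sum, hterm]

end Casimir

section Subdeterminant

variable {n k : ℕ} (p : Matrix (Fin n) (Fin n) ℂ) (i a : Fin k → Fin n)

theorem hasDerivAt_mul_exp_smul_mul_apply (Z W : Matrix (Fin n) (Fin n) ℂ) (x y : Fin n) (u : ℂ) :
    HasDerivAt (fun u : ℂ => (p * NormedSpace.exp (u • Z) * W) x y)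
      ((p * NormedSpace.exp (u • Z) * Z * W) x y) u := by
  -- any normed algebra structure inducing the product topology will do for `exp`
  let _ : NormedRing (Matrix (Fin n) (Fin n) ℂ) := Matrix.linftyOpNormedRing
  let _ : NormedAlgebra ℂ (Matrix (Fin n) (Fin n) ℂ) := Matrix.linftyOpNormedAlgebra
  have h := ((hasDerivAt_exp_smul_const Z u).const_mul p).mul_const W
  rw [← mul_assoc] at h
  exact hasDerivAt_pi.1 (hasDerivAt_pi.1 h x) y

theorem lieD2_det_submatrix (Z : Matrix (Fin n) (Fin n) ℂ) :
    lieD2 (fun z => (z.submatrix i a).det) p Z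
      = ∑ j, ∑ l, if l = j then ((p.submatrix i a).updateRow j fun b => (p * Z * Z) (i j) (a b)).det
        else (((p.submatrix i a).updateRow j fun b => (p * Z) (i j) (a b)).updateRow l
          fun b => (p * Z) (i l) (a b)).det := by
  set γ : ℂ → Matrix (Fin n) (Fin n) ℂ := fun u => p * NormedSpace.exp (u • Z)
  have h' (u : ℂ) (j b : Fin k) : HasDerivAt (fun u => (γ u).submatrix i a j b)
      ((γ u * Z).submatrix i a j b) u := by
    simpa using hasDerivAt_mul_exp_smul_mul_apply p Z 1 (i j) (a b) u
  have h'' (u : ℂ) (j b : Fin k) : HasDerivAt (fun u => (γ u * Z).submatrix i a j b)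
      ((γ u * Z * Z).submatrix i a j b) u :=
    hasDerivAt_mul_exp_smul_mul_apply p Z Z (i j) (a b) u
  have hγ0 : γ 0 = p := by simp [γ]
  refine (deriv_deriv_ofReal_zero (fun u => Matrix.hasDerivAt_det (h' u))
    (Matrix.hasDerivAt_sum_det_updateRow h' h'')).trans ?_
  simp only [hγ0]
  rfl

theorem basisSumU_det_updateRow_mul_mul (j : Fin k) :
    basisSumU n (fun Z => ((p.submatrix i a).updateRow j fun b => (p * Z * Z) (i j) (a b)).det)
      = -(n : ℂ) * (p.submatrix i a).det := calc
  _ = (Matrix.detRowAlternating.toMultilinearMap.toLinearMap (p.submatrix i a) j)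
        (-(n : ℂ) • (p.submatrix i a) j) :=
      LinearMap.map_linearMap_comp _ _ (u := fun (Z : Matrix (Fin n) (Fin n) ℂ) b =>
        (p * Z * Z) (i j) (a b)) fun b => basisSumU_mul_mul_apply p (i j) (a b)
  _ = -(n : ℂ) * (p.submatrix i a).det := by
      rw [map_smul, smul_eq_mul]
      exact congrArg (-(n : ℂ) * ·) (congrArg Matrix.det ((p.submatrix i a).updateRow_eq_self j))

theorem basisSumU_det_updateRow_updateRow {j l : Fin k} (hjl : j ≠ l) :
    basisSumU n (fun Z => (((p.submatrix i a).updateRow j fun b => (p * Z) (i j) (a b)).updateRow l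
        fun b => (p * Z) (i l) (a b)).det) = (p.submatrix i a).det := calc
  _ = (p.submatrix i a).detUpdateRow₂ hjl (-(p.submatrix i a) l) ((p.submatrix i a) j) :=
      LinearMap.map_bilinear_comp _ _
        (u := fun (Z : Matrix (Fin n) (Fin n) ℂ) b => (p * Z) (i j) (a b))
        (v := fun (Z : Matrix (Fin n) (Fin n) ℂ) b => (p * Z) (i l) (a b)) fun b b' => by
          simp [basisSumU_mul_apply_mul_mul_apply, mul_comm]
  _ = (p.submatrix i a).det := by
      simp [Matrix.detUpdateRow₂, Matrix.det_updateRow_updateRow_swap _ hjl]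

end Subdeterminant

theorem tau_subdeterminant_unitary_general (n k : ℕ) (i a : Fin k → Fin n)
    (p : Matrix (Fin n) (Fin n) ℂ) :
    tauU n (fun z => (z.submatrix i a).det) p
      = -((k : ℂ) * ((n : ℂ) - (k : ℂ) + 1)) * (p.submatrix i a).det := by
  set d := (p.submatrix i a).det
  have hterm (j l : Fin k) : basisSumU n (fun Z => if l = j
      then ((p.submatrix i a).updateRow j fun b => (p * Z * Z) (i j) (a b)).det
      else (((p.submatrix i a).updateRow j fun b => (p * Z) (i j) (a b)).updateRow l
        fun b => (p * Z) (i l) (a b)).det) = d - if l = j then (n + 1) * d else 0 := by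
    by_cases hl : l = j
    · subst hl
      simp only [if_pos, basisSumU_det_updateRow_mul_mul]
      ring
    · simpa [hl] using basisSumU_det_updateRow_updateRow p i a (Ne.symm hl)
  rw [tauU_eq_basisSumU, funext (lieD2_det_submatrix p i a)]
  simp [LinearMap.map_fun_sum, hterm, Finset.sum_sub_distrib]
  ring

/-- if `d_k` is a `k×k` subdeterminant of the generic element of `U(n)`,
given by strictly increasing row indices `i₁ < … < i_k` and column indices
`α₁ < … < α_k`, then `τ(d_k) = −k(n−k+1)·d_k` on `U(n)`. -/
theorem tau_subdeterminant_unitary (n k : ℕ) (hk : 1 ≤ k) (hkn : k ≤ n)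
    (i a : Fin k → Fin n) (hi : StrictMono i) (ha : StrictMono a)
    (p : Matrix (Fin n) (Fin n) ℂ) (hp : p ∈ Matrix.unitaryGroup (Fin n) ℂ) :
    tauU n (fun z => (z.submatrix i a).det) p
      = -((k : ℂ) * ((n : ℂ) - (k : ℂ) + 1)) * (p.submatrix i a).det :=
  tau_subdeterminant_unitary_general n k i a p

end
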